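/- arXiv:2011.12656 — 3 statements merged into one kernel-verified Lean document; each statement's English description precedes it below -/
import Mathlib

section
/- Let Λ be a finite, locally convex k-graph with no cycle with an entrance, let μ be an initial cycle, and let v be a vertex on μ with decomposition μ = ι_v τ_v, s(ι_v) = v = r(τ_v). Then in C*(Λ), the partial isometry s_{τ_v} satisfies s_{τ_v} s_{τ_v}* = s_v and s_{τ_v}* s_{τ_v} = s_{s(μ)}. In particular, s_v and s_{s(μ)} are von Neumann equivalent projections. -/
open scoped Classical

/-- A `k`-graph: a countable category with degree functor into `ℕ^k` satisfying the
unique factorisation property.  Composition `comp p q` is only meaningful when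
`src p = rng q` (junk otherwise). -/
structure KGraph (k : ℕ) where
  Path : Type
  [countablePath : Countable Path]
  src : Path → Path
  rng : Path → Path
  deg : Path → Fin k → ℕ
  comp : Path → Path → Path
  src_src : ∀ p, src (src p) = src p
  rng_src : ∀ p, rng (src p) = src p
  src_rng : ∀ p, src (rng p) = rng p
  rng_rng : ∀ p, rng (rng p) = rng p
  deg_src : ∀ p, deg (src p) = 0
  deg_rng : ∀ p, deg (rng p) = 0
  src_of_vertex : ∀ p, deg p = 0 → src p = p
  src_comp : ∀ p q, src p = rng q → src (comp p q) = src q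
  rng_comp : ∀ p q, src p = rng q → rng (comp p q) = rng p
  deg_comp : ∀ p q, src p = rng q → deg (comp p q) = deg p + deg q
  comp_id : ∀ p, comp p (src p) = p
  id_comp : ∀ p, comp (rng p) p = p
  comp_assoc : ∀ p q r, src p = rng q → src q = rng r →
    comp (comp p q) r = comp p (comp q r)
  factor_exists : ∀ lam (m n : Fin k → ℕ), deg lam = m + n →
    ∃ p q, src p = rng q ∧ deg p = m ∧ deg q = n ∧ comp p q = lam
  factor_unique : ∀ p q p' q', src p = rng q → src p' = rng q' →
    deg p = deg p' → deg q = deg q' → comp p q = comp p' q' →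
    p = p' ∧ q = q'

namespace KGraph

variable {k : ℕ} (Λ : KGraph k)

/-- `v` is a vertex (identity morphism). -/
def IsVertex (v : Λ.Path) : Prop := Λ.deg v = 0

/-- `v Λ^{e_i} ≠ ∅`. -/
def HasOut (v : Λ.Path) (i : Fin k) : Prop :=
  ∃ f, Λ.rng f = v ∧ Λ.deg f = Pi.single i 1

/-- `lam ∈ v Λ^{≤ n}`. -/
def InLe (v : Λ.Path) (n : Fin k → ℕ) (lam : Λ.Path) : Prop :=
  Λ.rng lam = v ∧ Λ.deg lam ≤ n ∧
    ∀ i, Λ.deg lam + Pi.single i 1 ≤ n → ¬ Λ.HasOut (Λ.src lam) i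

/-- `Λ` is row-finite. -/
def RowFinite : Prop := ∀ v n, {lam | Λ.rng lam = v ∧ Λ.deg lam = n}.Finite

/-- `Λ` is finite: each `Λ^n` is finite. -/
def FinitePaths : Prop := ∀ n, {lam | Λ.deg lam = n}.Finite

/-- `Λ` is locally convex. -/
def LocallyConvex : Prop :=
  ∀ i j : Fin k, i ≠ j → ∀ lam mu, Λ.deg lam = Pi.single i 1 →
    Λ.deg mu = Pi.single j 1 → Λ.rng lam = Λ.rng mu →
    Λ.HasOut (Λ.src lam) j ∧ Λ.HasOut (Λ.src mu) i

/-- Split `lam` as a pair of paths of degrees `m` and `deg lam - m` (junk if `¬ m ≤ deg lam`). -/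
noncomputable def split (lam : Λ.Path) (m : Fin k → ℕ) : Λ.Path × Λ.Path :=
  if h : m ≤ Λ.deg lam then
    have hd : Λ.deg lam = m + (Λ.deg lam - m) := by
      funext i
      have hi : m i ≤ Λ.deg lam i := h i
      simp only [Pi.add_apply, Pi.sub_apply]
      omega
    ((Λ.factor_exists lam m (Λ.deg lam - m) hd).choose,
     (Λ.factor_exists lam m (Λ.deg lam - m) hd).choose_spec.choose)
  else (lam, lam)

/-- `lam(0, m)`. -/
noncomputable def front (lam : Λ.Path) (m : Fin k → ℕ) : Λ.Path := (Λ.split lam m).1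

/-- `lam(m, d(lam))`. -/
noncomputable def back (lam : Λ.Path) (m : Fin k → ℕ) : Λ.Path := (Λ.split lam m).2

/-- `lam(m)`, the vertex of `lam` at position `m`. -/
noncomputable def vertexAt (lam : Λ.Path) (m : Fin k → ℕ) : Λ.Path := Λ.rng (Λ.back lam m)

/-- A cycle: a non-vertex path with equal range and source. -/
def IsCycle (lam : Λ.Path) : Prop := Λ.deg lam ≠ 0 ∧ Λ.rng lam = Λ.src lam

/-- `lam^n` for a cycle `lam`. -/
noncomputable def cpow (lam : Λ.Path) : ℕ → Λ.Path
  | 0 => Λ.rng lam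
  | n + 1 => Λ.comp lam (cpow lam n)

/-- `m ≤ d(lam^∞)`. -/
def LeInfDeg (lam : Λ.Path) (m : Fin k → ℕ) : Prop := ∀ i, Λ.deg lam i = 0 → m i = 0

/-- The initial segment `lam^∞(0, m)` of the infinite path obtained by repeating `lam`. -/
noncomputable def infSeg (lam : Λ.Path) (m : Fin k → ℕ) : Λ.Path :=
  Λ.front (Λ.cpow lam (Finset.univ.sup m + 1)) m

/-- The vertex `lam^∞(m)`. -/
noncomputable def infVertexAt (lam : Λ.Path) (m : Fin k → ℕ) : Λ.Path :=
  Λ.vertexAt (Λ.cpow lam (Finset.univ.sup m + 1)) m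

/-- `lam` is a cycle with an entrance. -/
def HasEntrance (lam : Λ.Path) : Prop :=
  ∃ τ, Λ.rng τ = Λ.rng lam ∧ Λ.LeInfDeg lam (Λ.deg τ) ∧ τ ≠ Λ.infSeg lam (Λ.deg τ)

/-- `Λ` has no cycle with an entrance. -/
def NoCycleWithEntrance : Prop := ¬ ∃ lam, Λ.IsCycle lam ∧ Λ.HasEntrance lam

/-- An initial cycle. -/
def IsInitialCycle (mu : Λ.Path) : Prop :=
  Λ.rng mu = Λ.src mu ∧ ∀ i, Λ.deg mu i = 0 → ¬ Λ.HasOut (Λ.rng mu) i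

/-- `v` is a vertex on the (initial) cycle `mu`. -/
def OnCycle (mu v : Λ.Path) : Prop := ∃ p, p ≤ Λ.deg mu ∧ v = Λ.vertexAt mu p

/-- `lam` extends `mu`, i.e. `lam = mu a` for some path `a`. -/
def Extends (lam mu : Λ.Path) : Prop :=
  ∃ a, Λ.src mu = Λ.rng a ∧ Λ.comp mu a = lam

/-- `lam` is a minimal common extension of `mu` and `nu`. -/
def MCE (mu nu lam : Λ.Path) : Prop :=
  Λ.Extends lam mu ∧ Λ.Extends lam nu ∧ Λ.deg lam = Λ.deg mu ⊔ Λ.deg nu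

/-- `H` is hereditary. -/
def Hereditary (H : Set Λ.Path) : Prop := ∀ lam, Λ.rng lam ∈ H → Λ.src lam ∈ H

/-- `H` is saturated. -/
def Saturated (H : Set Λ.Path) : Prop :=
  ∀ v, Λ.IsVertex v →
    (∃ i : Fin k, ∀ lam, Λ.InLe v (Pi.single i 1) lam → Λ.src lam ∈ H) → v ∈ H

/-- `Λ` is cofinal. -/
def Cofinal : Prop :=
  ∀ v w, Λ.IsVertex v → Λ.IsVertex w → ∃ n : Fin k → ℕ,
    ∀ lam, Λ.InLe w n lam → ∃ mu, Λ.rng mu = v ∧ Λ.src mu = Λ.src lam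

end KGraph

/-- A Cuntz–Krieger `Λ`-family in a star algebra `A`: mutually orthogonal vertex
projections, multiplicativity along composition, `s_λ* s_λ = s_{s(λ)}`, and the
Cuntz–Krieger relation `s_v = ∑_{λ ∈ vΛ^{≤n}} s_λ s_λ*`. -/
def IsCKFamily {k : ℕ} (Λ : KGraph k) {A : Type*} [Ring A] [StarRing A]
    (S : Λ.Path → A) : Prop :=
  (∀ v, Λ.IsVertex v → IsSelfAdjoint (S v) ∧ S v * S v = S v) ∧
  (∀ v w, Λ.IsVertex v → Λ.IsVertex w → v ≠ w → S v * S w = 0) ∧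
  (∀ p q, Λ.src p = Λ.rng q → S p * S q = S (Λ.comp p q)) ∧
  (∀ p, star (S p) * S p = S (Λ.src p)) ∧
  (∀ v n, Λ.IsVertex v →
    S v = ∑ᶠ (lam) (_ : Λ.InLe v n lam), S lam * star (S lam))

namespace KGraph

variable {k : ℕ} (Λ : KGraph k)

lemma split_spec (lam : Λ.Path) (m : Fin k → ℕ) (h : m ≤ Λ.deg lam) :
    Λ.src (Λ.front lam m) = Λ.rng (Λ.back lam m) ∧ Λ.deg (Λ.front lam m) = m ∧
      Λ.deg (Λ.back lam m) = Λ.deg lam - m ∧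
      Λ.comp (Λ.front lam m) (Λ.back lam m) = lam := by
  have hd : Λ.deg lam = m + (Λ.deg lam - m) := by
    funext i
    have hi : m i ≤ Λ.deg lam i := h i
    simp only [Pi.add_apply, Pi.sub_apply]; omega
  simp only [front, back, split, dif_pos h]
  exact (Λ.factor_exists lam m (Λ.deg lam - m) hd).choose_spec.choose_spec

lemma unique_path (hnc : Λ.NoCycleWithEntrance) (mu : Λ.Path) (hcyc : Λ.IsCycle mu)
    (a b : Λ.Path) (ha : Λ.rng a = Λ.rng mu) (hb : Λ.rng b = Λ.rng mu)
    (hle : Λ.LeInfDeg mu (Λ.deg a)) (hdeg : Λ.deg a = Λ.deg b) : a = b := by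
  have hmu : ¬ Λ.HasEntrance mu := fun h => hnc ⟨mu, hcyc, h⟩
  simp only [HasEntrance, not_exists, not_and] at hmu
  have h1 : a = Λ.infSeg mu (Λ.deg a) := by
    by_contra h; exact hmu a ha hle h
  have h2 : b = Λ.infSeg mu (Λ.deg b) := by
    by_contra h; exact hmu b hb (hdeg ▸ hle) h
  rw [h1, h2, hdeg]

lemma vertex_eq_rng (w : Λ.Path) (hw : Λ.IsVertex w) : Λ.rng w = w := by
  conv_lhs => rw [← Λ.src_of_vertex w hw, Λ.rng_src, Λ.src_of_vertex w hw]

end KGraph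

/-- For an initial cycle `μ` with vertex `v = μ(p)` and `τ_v = μ(p, d(μ))`, in any
Cuntz–Krieger family, `s_{τ_v} s_{τ_v}* = s_v` and `s_{τ_v}* s_{τ_v} = s_{s(μ)}`;
in particular `s_v` and `s_{s(μ)}` are von Neumann equivalent. -/
theorem initial_cycle_partial_isometry {k : ℕ} (Λ : KGraph k) (hfin : Λ.FinitePaths)
    (hlc : Λ.LocallyConvex) (hnc : Λ.NoCycleWithEntrance)
    (mu : Λ.Path) (hmu : Λ.IsInitialCycle mu)
    (v : Λ.Path) (p : Fin k → ℕ) (hp : p ≤ Λ.deg mu) (hv : v = Λ.vertexAt mu p)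
    {A : Type*} [NormedRing A] [StarRing A] [CStarRing A] [CompleteSpace A]
    [NormedAlgebra ℂ A] [StarModule ℂ A]
    (S : Λ.Path → A) (hS : IsCKFamily Λ S) :
    S (Λ.back mu p) * star (S (Λ.back mu p)) = S v ∧
    star (S (Λ.back mu p)) * S (Λ.back mu p) = S (Λ.src mu) ∧
    ∃ w : A, S v = w * star w ∧ S (Λ.src mu) = star w * w := by
  obtain ⟨hsr, hdf, hdb, hcomp⟩ := Λ.split_spec mu p hp
  set τ := Λ.back mu p with hτ
  set σ := Λ.front mu p with hσ
  have hrv : v = Λ.rng τ := hv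
  have hni : ∀ i, Λ.deg τ i = Λ.deg mu i - p i := by
    intro i; rw [hdb]; rfl
  have hsrcτ : Λ.src τ = Λ.src mu := by
    have h := Λ.src_comp σ τ hsr
    rw [hcomp] at h
    exact h.symm
  have hvert : Λ.IsVertex v := by rw [hrv]; exact Λ.deg_rng τ
  have hiff : ∀ lam, Λ.InLe v (Λ.deg τ) lam ↔ lam = τ := by
    intro lam
    constructor
    · rintro ⟨h1, h2, h3⟩
      by_cases hd0 : Λ.deg mu = 0
      · have hmu0 : ∀ i, Λ.deg mu i = 0 := fun i => congrFun hd0 i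
        have hτ0 : Λ.IsVertex τ := by
          show Λ.deg τ = 0
          funext i
          have hpi : p i ≤ Λ.deg mu i := hp i
          have := hni i
          have := hmu0 i
          simp only [Pi.zero_apply]
          omega
        have hlam0 : Λ.IsVertex lam := by
          show Λ.deg lam = 0
          funext i
          have hli : Λ.deg lam i ≤ Λ.deg τ i := h2 i
          have := congrFun hτ0 i
          simp only [Pi.zero_apply] at *
          omega
        have e1 : lam = v := by rw [← Λ.vertex_eq_rng lam hlam0, h1]
        have e2 : τ = v := by rw [← Λ.vertex_eq_rng τ hτ0, ← hrv]
        rw [e1, e2]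
      · have hcyc : Λ.IsCycle mu := ⟨hd0, hmu.1⟩
        have uniq := Λ.unique_path hnc mu hcyc
        have hσl : Λ.src σ = Λ.rng lam := by rw [hsr, h1, hrv]
        have hrσ : Λ.rng σ = Λ.rng mu := by
          have h := Λ.rng_comp σ τ hsr
          rw [hcomp] at h
          exact h.symm
        have hclr : Λ.rng (Λ.comp σ lam) = Λ.rng mu := by rw [Λ.rng_comp σ lam hσl, hrσ]
        have hcld : Λ.deg (Λ.comp σ lam) = p + Λ.deg lam := by
          rw [Λ.deg_comp σ lam hσl, hdf]
        have hlinf : Λ.LeInfDeg mu (p + Λ.deg lam) := by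
          intro i hi
          have hi' : Λ.deg mu i = 0 := hi
          have hpi : p i ≤ Λ.deg mu i := hp i
          have h2i : Λ.deg lam i ≤ Λ.deg τ i := h2 i
          have := hni i
          simp only [Pi.add_apply]
          omega
        have hdeq : Λ.deg lam = Λ.deg τ := by
          funext i
          by_contra hne
          have hlt : Λ.deg lam i < Λ.deg τ i := lt_of_le_of_ne (h2 i) hne
          have hho : ¬ Λ.HasOut (Λ.src lam) i := by
            apply h3
            rw [Pi.le_def]
            intro j
            have h2j : Λ.deg lam j ≤ Λ.deg τ j := h2 j
            by_cases hj : j = i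
            · subst hj; simp only [Pi.add_apply, Pi.single_eq_same]; omega
            · simp only [Pi.add_apply, Pi.single_eq_of_ne hj]; omega
          apply hho
          set m : Fin k → ℕ := p + Λ.deg lam with hm
          have hmi : ∀ j, m j = p j + Λ.deg lam j := fun j => rfl
          have hmle : m ≤ Λ.deg mu := by
            rw [Pi.le_def]
            intro j
            have hpj : p j ≤ Λ.deg mu j := hp j
            have h2j : Λ.deg lam j ≤ Λ.deg τ j := h2 j
            have := hni j
            have := hmi j
            omega
          obtain ⟨hsr2, hdf2, hdb2, hcomp2⟩ := Λ.split_spec mu m hmle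
          have hra : Λ.rng (Λ.front mu m) = Λ.rng mu := by
            have h := Λ.rng_comp _ _ hsr2
            rw [hcomp2] at h
            exact h.symm
          have heq : Λ.comp σ lam = Λ.front mu m := by
            apply uniq _ _ hclr hra
            · rw [hcld]; exact hlinf
            · rw [hcld, hdf2]
          have hsl : Λ.src lam = Λ.rng (Λ.back mu m) := by
            have h := Λ.src_comp σ lam hσl
            rw [heq] at h
            rw [← h, hsr2]
          have hone : (Pi.single i 1 : Fin k → ℕ) ≤ Λ.deg (Λ.back mu m) := by
            rw [Pi.le_def]
            intro j
            have hbj : Λ.deg (Λ.back mu m) j = Λ.deg mu j - m j := by rw [hdb2]; rfl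
            have hpj : p j ≤ Λ.deg mu j := hp j
            have := hni j
            have := hmi j
            by_cases hj : j = i
            · subst hj; simp only [Pi.single_eq_same]; omega
            · simp only [Pi.single_eq_of_ne hj]; omega
          obtain ⟨hsr3, hdf3, hdb3, hcomp3⟩ := Λ.split_spec (Λ.back mu m) (Pi.single i 1) hone
          refine ⟨Λ.front (Λ.back mu m) (Pi.single i 1), ?_, hdf3⟩
          have h := Λ.rng_comp _ _ hsr3
          rw [hcomp3] at h
          rw [← h, hsl]
        have hdmu : Λ.deg (Λ.comp σ lam) = Λ.deg mu := by
          rw [hcld, hdeq]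
          funext i
          have hpi : p i ≤ Λ.deg mu i := hp i
          have := hni i
          simp only [Pi.add_apply]
          omega
        have hclmu : Λ.comp σ lam = mu := by
          apply uniq _ _ hclr rfl
          · rw [hcld]; exact hlinf
          · exact hdmu
        exact (Λ.factor_unique σ lam σ τ hσl hsr rfl hdeq (by rw [hclmu, hcomp])).2
    · rintro rfl
      refine ⟨hrv.symm, le_refl _, fun i hle => ?_⟩
      have h := hle i
      simp only [Pi.add_apply, Pi.single_eq_same] at h
      omega
  have hck := hS.2.2.2.2 v (Λ.deg τ) hvert
  have hsum : (∑ᶠ (lam) (_ : Λ.InLe v (Λ.deg τ) lam), S lam * star (S lam))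
      = S τ * star (S τ) := by
    have h1 : ∀ lam, (Λ.InLe v (Λ.deg τ) lam) = (lam ∈ ({τ} : Set Λ.Path)) := by
      intro lam
      apply propext
      rw [Set.mem_singleton_iff]
      exact hiff lam
    calc (∑ᶠ (lam) (_ : Λ.InLe v (Λ.deg τ) lam), S lam * star (S lam))
        = ∑ᶠ (lam) (_ : lam ∈ ({τ} : Set Λ.Path)), S lam * star (S lam) := by
          apply finsum_congr
          intro lam
          rw [h1 lam]
      _ = S τ * star (S τ) := finsum_mem_singleton
  have hfirst : S τ * star (S τ) = S v := by rw [hck, hsum]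
  have hsecond : star (S τ) * S τ = S (Λ.src mu) := by
    rw [hS.2.2.2.1 τ, hsrcτ]
  exact ⟨hfirst, hsecond, S τ, hfirst.symm, hsecond.symm⟩
end

section
/- Let Λ be a locally convex row-finite k-graph and suppose λ is a cycle in Λ and τ ∈ r(λ)Λ satisfies MCE(λ, τ) = ∅, where MCE(μ,ν) = μΛ ∩ νΛ ∩ Λ^{d(μ)∨d(ν)}. Then Λ contains a cycle with an entrance, i.e. a cycle λ' and a path τ' ∈ r(λ')Λ with d(τ') ≤ d(λ'^∞) and τ' ≠ λ'^∞(0, d(τ')). -/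
open scoped Classical

namespace KGraph

variable {k : ℕ} {Λ : KGraph k}

lemma aux_split {lam : Λ.Path} {m : Fin k → ℕ} (h : m ≤ Λ.deg lam) :
    Λ.src (Λ.front lam m) = Λ.rng (Λ.back lam m) ∧ Λ.deg (Λ.front lam m) = m ∧
      Λ.deg (Λ.back lam m) = Λ.deg lam - m ∧ Λ.comp (Λ.front lam m) (Λ.back lam m) = lam := by
  have hd : Λ.deg lam = m + (Λ.deg lam - m) := by
    funext i
    have := Pi.le_def.mp h i
    simp only [Pi.add_apply, Pi.sub_apply]
    omega
  unfold front back split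
  rw [dif_pos h]
  exact (Λ.factor_exists lam m (Λ.deg lam - m) hd).choose_spec.choose_spec

lemma aux_rng_front {lam : Λ.Path} {m : Fin k → ℕ} (h : m ≤ Λ.deg lam) :
    Λ.rng (Λ.front lam m) = Λ.rng lam := by
  obtain ⟨h1, _, _, h4⟩ := aux_split h
  conv_rhs => rw [← h4]
  rw [Λ.rng_comp _ _ h1]

lemma aux_src_back {lam : Λ.Path} {m : Fin k → ℕ} (h : m ≤ Λ.deg lam) :
    Λ.src (Λ.back lam m) = Λ.src lam := by
  obtain ⟨h1, _, _, h4⟩ := aux_split h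
  conv_rhs => rw [← h4]
  rw [Λ.src_comp _ _ h1]

lemma aux_front_unique {p q lam : Λ.Path} (hsrc : Λ.src p = Λ.rng q)
    (hcomp : Λ.comp p q = lam) :
    Λ.front lam (Λ.deg p) = p ∧ Λ.back lam (Λ.deg p) = q := by
  have hd : Λ.deg lam = Λ.deg p + Λ.deg q := by rw [← hcomp, Λ.deg_comp _ _ hsrc]
  have hle : Λ.deg p ≤ Λ.deg lam := by
    rw [Pi.le_def]; intro i; rw [hd]; simp only [Pi.add_apply]; omega
  obtain ⟨h1, h2, h3, h4⟩ := aux_split hle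
  exact Λ.factor_unique _ _ p q h1 hsrc h2
    (by rw [h3, hd]; funext i; simp only [Pi.sub_apply, Pi.add_apply]; omega)
    (h4.trans hcomp.symm)

lemma aux_vertex {p : Λ.Path} (h : Λ.deg p = 0) : Λ.src p = p ∧ Λ.rng p = p := by
  have h1 := Λ.src_of_vertex p h
  have h2 := Λ.rng_src p
  rw [h1] at h2
  exact ⟨h1, h2⟩

lemma aux_rng_cpow {lam : Λ.Path} (h : Λ.rng lam = Λ.src lam) (n : ℕ) :
    Λ.rng (Λ.cpow lam n) = Λ.rng lam := by
  induction n with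
  | zero => exact Λ.rng_rng lam
  | succ n ih =>
    show Λ.rng (Λ.comp lam (Λ.cpow lam n)) = Λ.rng lam
    exact Λ.rng_comp lam _ ((ih.trans h).symm)

lemma aux_cpow_two {lam : Λ.Path} (h : Λ.rng lam = Λ.src lam) :
    Λ.cpow lam 2 = Λ.comp lam lam := by
  show Λ.comp lam (Λ.comp lam (Λ.rng lam)) = Λ.comp lam lam
  rw [h, Λ.comp_id]

lemma aux_sup_single (i : Fin k) :
    Finset.univ.sup (Pi.single i 1 : Fin k → ℕ) = 1 := by
  apply le_antisymm
  · refine Finset.sup_le fun j _ => ?_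
    rcases eq_or_ne j i with rfl | h
    · simp
    · simp [Pi.single_eq_of_ne h]
  · simpa using Finset.le_sup (f := (Pi.single i 1 : Fin k → ℕ)) (Finset.mem_univ i)

/-- `u` carries a cycle of the same degree as `lam`. -/
def AuxCycV (Λ : KGraph k) (lam u : Λ.Path) : Prop :=
  ∃ ρ, Λ.deg ρ = Λ.deg lam ∧ Λ.rng ρ = u ∧ Λ.src ρ = u

/-- `w` is reachable from a cyclic vertex by a path flat relative to `lam`. -/
def AuxR (Λ : KGraph k) (lam w : Λ.Path) : Prop :=
  ∃ α, (∀ i, Λ.deg lam i ≠ 0 → Λ.deg α i = 0) ∧ AuxCycV Λ lam (Λ.rng α) ∧ Λ.src α = w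

lemma auxA {lam ρ : Λ.Path} {m : Fin k → ℕ} (hdeg : Λ.deg ρ = Λ.deg lam)
    (hrs : Λ.rng ρ = Λ.src ρ) (hm : m ≤ Λ.deg ρ) :
    AuxCycV Λ lam (Λ.src (Λ.front (Λ.comp ρ ρ) m)) := by
  obtain ⟨h1, h2, h3, h4⟩ := aux_split hm
  set a := Λ.front ρ m with ha
  set b := Λ.back ρ m with hb
  have hsb : Λ.src ρ = Λ.src b := by rw [← h4, Λ.src_comp a b h1]
  have hra : Λ.rng a = Λ.rng ρ := aux_rng_front hm
  have hsbr : Λ.src b = Λ.rng ρ := hsb.symm.trans hrs.symm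
  have hassoc : Λ.comp (Λ.comp a b) ρ = Λ.comp a (Λ.comp b ρ) := Λ.comp_assoc a b ρ h1 hsbr
  have hcomp2 : Λ.comp a (Λ.comp b ρ) = Λ.comp ρ ρ := by rw [← hassoc, h4]
  have hsrc_a : Λ.src a = Λ.rng (Λ.comp b ρ) := by rw [Λ.rng_comp b ρ hsbr]; exact h1
  have hfu := aux_front_unique hsrc_a hcomp2
  rw [h2] at hfu
  have hmc : m ≤ Λ.deg (Λ.comp ρ ρ) := by
    have hd2 : Λ.deg (Λ.comp ρ ρ) = Λ.deg ρ + Λ.deg ρ := Λ.deg_comp ρ ρ hrs.symm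
    rw [Pi.le_def]; intro i
    rw [hd2]; simp only [Pi.add_apply]
    have := Pi.le_def.mp hm i; omega
  obtain ⟨g1, g2, g3, g4⟩ := aux_split hmc
  have htarget : Λ.src (Λ.front (Λ.comp ρ ρ) m) = Λ.rng b := by
    rw [g1, hfu.2, Λ.rng_comp b ρ hsbr]
  rw [htarget]
  have hba : Λ.src b = Λ.rng a := hsbr.trans hra.symm
  refine ⟨Λ.comp b a, ?_, Λ.rng_comp b a hba, ?_⟩
  · rw [Λ.deg_comp b a hba, h3, h2, ← hdeg]
    funext i; simp only [Pi.add_apply, Pi.sub_apply]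
    have := Pi.le_def.mp hm i; omega
  · rw [Λ.src_comp b a hba]; exact h1

lemma aux_closure {lam : Λ.Path} (hcyc : Λ.IsCycle lam)
    (hne : ∀ ρ, Λ.IsCycle ρ → ∀ t, Λ.rng t = Λ.rng ρ → Λ.LeInfDeg ρ (Λ.deg t) →
      t = Λ.infSeg ρ (Λ.deg t))
    {e : Λ.Path} {i : Fin k} (hdeg : Λ.deg e = Pi.single i 1)
    (hR : AuxR Λ lam (Λ.rng e)) : AuxR Λ lam (Λ.src e) := by
  obtain ⟨α, hflat, hcv, hsrcα⟩ := hR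
  by_cases hi : Λ.deg lam i = 0
  · refine ⟨Λ.comp α e, ?_, ?_, Λ.src_comp α e hsrcα⟩
    · intro j hj
      have hji : j ≠ i := fun h => hj (h ▸ hi)
      rw [Λ.deg_comp α e hsrcα, Pi.add_apply, hflat j hj, hdeg,
        Pi.single_eq_of_ne hji]
      rfl
    · rw [Λ.rng_comp α e hsrcα]; exact hcv
  · obtain ⟨ρ, hρd, hρr, hρs⟩ := hcv
    have hρcyc : Λ.IsCycle ρ := ⟨by rw [hρd]; exact hcyc.1, by rw [hρr, hρs]⟩
    have hcd : Λ.deg (Λ.comp α e) = Pi.single i 1 + Λ.deg α := by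
      rw [Λ.deg_comp α e hsrcα, hdeg, add_comm]
    obtain ⟨e', α', h1, h2, h3, h4⟩ :=
      Λ.factor_exists (Λ.comp α e) (Pi.single i 1) (Λ.deg α) hcd
    have hre' : Λ.rng e' = Λ.rng ρ := by
      have hh : Λ.rng (Λ.comp e' α') = Λ.rng e' := Λ.rng_comp e' α' h1
      rw [h4, Λ.rng_comp α e hsrcα] at hh
      rw [← hh]; exact hρr.symm
    have hlei : Λ.LeInfDeg ρ (Λ.deg e') := by
      intro j hj
      have hji : j ≠ i := by rintro rfl; rw [hρd] at hj; exact hi hj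
      rw [h2, Pi.single_eq_of_ne hji]
    have he' := hne ρ hρcyc e' hre' hlei
    rw [h2] at he'
    have hrsρ : Λ.rng ρ = Λ.src ρ := hρcyc.2
    have hseg : Λ.infSeg ρ (Pi.single i 1) = Λ.front (Λ.comp ρ ρ) (Pi.single i 1) := by
      unfold infSeg
      rw [aux_sup_single i, aux_cpow_two hrsρ]
    have hm : (Pi.single i 1 : Fin k → ℕ) ≤ Λ.deg ρ := by
      rw [Pi.le_def]; intro j
      rcases eq_or_ne j i with rfl | h
      · rw [Pi.single_eq_same, hρd]; omega
      · rw [Pi.single_eq_of_ne h]; omega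
    have hcvs : AuxCycV Λ lam (Λ.src e') := by
      rw [he', hseg]; exact auxA hρd hrsρ hm
    refine ⟨α', ?_, ?_, ?_⟩
    · intro j hj; rw [h3]; exact hflat j hj
    · rw [← h1]; exact hcvs
    · have hh : Λ.src (Λ.comp e' α') = Λ.src α' := Λ.src_comp e' α' h1
      rw [h4, Λ.src_comp α e hsrcα] at hh
      exact hh.symm

lemma aux_Q (hlc : Λ.LocallyConvex) {lam : Λ.Path} (hcyc : Λ.IsCycle lam) :
    ∀ N (α : Λ.Path), (∑ j, Λ.deg α j) = N → (∀ j, Λ.deg lam j ≠ 0 → Λ.deg α j = 0) →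
      AuxCycV Λ lam (Λ.rng α) → ∀ i, Λ.deg lam i ≠ 0 → Λ.HasOut (Λ.src α) i := by
  intro N
  induction N using Nat.strong_induction_on with
  | _ N ih =>
    intro α hN hflat hcv i hi
    by_cases h0 : Λ.deg α = 0
    · obtain ⟨hs, hr⟩ := aux_vertex h0
      obtain ⟨ρ, hρd, hρr, hρs⟩ := hcv
      rw [hr] at hρr
      have hm : (Pi.single i 1 : Fin k → ℕ) ≤ Λ.deg ρ := by
        rw [Pi.le_def]; intro j
        rcases eq_or_ne j i with rfl | h
        · rw [Pi.single_eq_same, hρd]; omega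
        · rw [Pi.single_eq_of_ne h]; omega
      obtain ⟨g1, g2, g3, g4⟩ := aux_split hm
      refine ⟨Λ.front ρ (Pi.single i 1), ?_, g2⟩
      rw [aux_rng_front hm, hρr]
      exact hs.symm
    · have hex : ∃ j, Λ.deg α j ≠ 0 := by
        by_contra h; push_neg at h; exact h0 (funext fun j => h j)
      obtain ⟨j, hj⟩ := hex
      have hjflat : Λ.deg lam j = 0 := by
        by_contra h; exact hj (hflat j h)
      have hij : i ≠ j := by rintro rfl; exact hi hjflat
      set m := Λ.deg α - Pi.single j 1 with hm_def
      have hm : m ≤ Λ.deg α := by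
        rw [Pi.le_def]; intro x
        simp only [hm_def, Pi.sub_apply]; omega
      obtain ⟨h1, h2, h3, h4⟩ := aux_split hm
      have hfdeg : Λ.deg (Λ.back α m) = Pi.single j 1 := by
        rw [h3]; funext x
        simp only [hm_def, Pi.sub_apply]
        rcases eq_or_ne x j with rfl | hx
        · rw [Pi.single_eq_same]; omega
        · rw [Pi.single_eq_of_ne hx]; omega
      have hsum : (∑ x, Λ.deg (Λ.front α m) x) < N := by
        rw [h2, ← hN]
        refine Finset.sum_lt_sum (fun x _ => Pi.le_def.mp hm x) ⟨j, Finset.mem_univ j, ?_⟩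
        simp only [hm_def, Pi.sub_apply, Pi.single_eq_same]; omega
      have hflatβ : ∀ x, Λ.deg lam x ≠ 0 → Λ.deg (Λ.front α m) x = 0 := by
        intro x hx
        rw [h2]
        simp only [hm_def, Pi.sub_apply, hflat x hx, Nat.zero_sub]
      have hcvβ : AuxCycV Λ lam (Λ.rng (Λ.front α m)) := by
        rw [aux_rng_front hm]; exact hcv
      obtain ⟨g, hgr, hgd⟩ := ih _ hsum (Λ.front α m) rfl hflatβ hcvβ i hi
      have hres := (hlc i j hij g (Λ.back α m) hgd hfdeg (by rw [hgr, h1])).2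
      rwa [aux_src_back hm] at hres

lemma aux_build (hlc : Λ.LocallyConvex) {lam : Λ.Path} (hcyc : Λ.IsCycle lam)
    (hne : ∀ ρ, Λ.IsCycle ρ → ∀ t, Λ.rng t = Λ.rng ρ → Λ.LeInfDeg ρ (Λ.deg t) →
      t = Λ.infSeg ρ (Λ.deg t)) :
    ∀ N (n : Fin k → ℕ) (w : Λ.Path), (∑ j, n j) = N → (∀ i, n i ≠ 0 → Λ.deg lam i ≠ 0) →
      AuxR Λ lam w → ∃ σ, Λ.rng σ = w ∧ Λ.deg σ = n := by
  intro N
  induction N using Nat.strong_induction_on with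
  | _ N ih =>
    intro n w hN hn hR
    by_cases h0 : n = 0
    · obtain ⟨α, hflat, hcv, hsrc⟩ := hR
      subst h0
      exact ⟨w, by rw [← hsrc, Λ.rng_src], by rw [← hsrc, Λ.deg_src]⟩
    · obtain ⟨j, hj⟩ : ∃ j, n j ≠ 0 := by
        by_contra h; push_neg at h; exact h0 (funext fun x => h x)
      have hjc := hn j hj
      have hout : Λ.HasOut w j := by
        obtain ⟨α, hflat, hcv, hsrc⟩ := hR
        rw [← hsrc]
        exact aux_Q hlc hcyc _ α rfl hflat hcv j hjc
      obtain ⟨e, her, hed⟩ := hout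
      have hRe : AuxR Λ lam (Λ.src e) :=
        aux_closure hcyc hne hed (by rw [her]; exact hR)
      have hlt : (∑ x, ((n - Pi.single j 1 : Fin k → ℕ)) x) < N := by
        rw [← hN]
        refine Finset.sum_lt_sum (fun x _ => ?_) ⟨j, Finset.mem_univ j, ?_⟩
        · simp only [Pi.sub_apply]; omega
        · simp only [Pi.sub_apply, Pi.single_eq_same]; omega
      obtain ⟨σ', hσr, hσd⟩ := ih _ hlt ((n - Pi.single j 1 : Fin k → ℕ)) (Λ.src e) rfl
        (fun x hx => hn x (by simp only [Pi.sub_apply] at hx; omega)) hRe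
      refine ⟨Λ.comp e σ', ?_, ?_⟩
      · rw [Λ.rng_comp e σ' hσr.symm]; exact her
      · rw [Λ.deg_comp e σ' hσr.symm, hed, hσd]
        funext x
        simp only [Pi.add_apply, Pi.sub_apply]
        rcases eq_or_ne x j with rfl | hx
        · rw [Pi.single_eq_same]; omega
        · rw [Pi.single_eq_of_ne hx]; omega

lemma aux_Rsrc (hlc : Λ.LocallyConvex) {lam : Λ.Path} (hcyc : Λ.IsCycle lam)
    (hne : ∀ ρ, Λ.IsCycle ρ → ∀ t, Λ.rng t = Λ.rng ρ → Λ.LeInfDeg ρ (Λ.deg t) →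
      t = Λ.infSeg ρ (Λ.deg t)) :
    ∀ N (p : Λ.Path), (∑ j, Λ.deg p j) = N →
      AuxR Λ lam (Λ.rng p) → AuxR Λ lam (Λ.src p) := by
  intro N
  induction N using Nat.strong_induction_on with
  | _ N ih =>
    intro p hN hR
    by_cases h0 : Λ.deg p = 0
    · obtain ⟨hs, hr⟩ := aux_vertex h0
      rw [hr] at hR; rw [hs]; exact hR
    · obtain ⟨j, hj⟩ : ∃ j, Λ.deg p j ≠ 0 := by
        by_contra h; push_neg at h; exact h0 (funext fun x => h x)
      have hmle : (Pi.single j 1 : Fin k → ℕ) ≤ Λ.deg p := by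
        rw [Pi.le_def]; intro x
        rcases eq_or_ne x j with rfl | h
        · rw [Pi.single_eq_same]; omega
        · rw [Pi.single_eq_of_ne h]; omega
      obtain ⟨h1, h2, h3, h4⟩ := aux_split hmle
      have hRe := aux_closure hcyc hne h2 (by rw [aux_rng_front hmle]; exact hR)
      rw [h1] at hRe
      have hlt : (∑ x, Λ.deg (Λ.back p (Pi.single j 1)) x) < N := by
        rw [h3, ← hN]
        refine Finset.sum_lt_sum (fun x _ => ?_) ⟨j, Finset.mem_univ j, ?_⟩
        · simp only [Pi.sub_apply]; omega
        · simp only [Pi.sub_apply, Pi.single_eq_same]; omega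
      have := ih _ hlt (Λ.back p (Pi.single j 1)) rfl hRe
      rwa [aux_src_back hmle] at this

end KGraph

/-- In a row-finite, locally convex k-graph, if a cycle `λ` and a path
`τ ∈ r(λ)Λ` satisfy `MCE(λ, τ) = ∅`, then `Λ` contains a cycle with an entrance. -/
theorem mce_empty_implies_entrance {k : ℕ} (Λ : KGraph k)
    (hrf : Λ.RowFinite) (hlc : Λ.LocallyConvex)
    (lam τ : Λ.Path) (hcyc : Λ.IsCycle lam) (hτ : Λ.rng τ = Λ.rng lam)
    (hmce : ¬ ∃ x, Λ.MCE lam τ x) :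
    ∃ lam', Λ.IsCycle lam' ∧ Λ.HasEntrance lam' := by
  by_contra hNo
  apply hmce
  have hne : ∀ ρ, Λ.IsCycle ρ → ∀ t, Λ.rng t = Λ.rng ρ → Λ.LeInfDeg ρ (Λ.deg t) →
      t = Λ.infSeg ρ (Λ.deg t) := by
    intro ρ hρ t h1 h2
    by_contra h3
    exact hNo ⟨ρ, hρ, t, h1, h2, h3⟩
  have hR0 : KGraph.AuxR Λ lam (Λ.rng τ) := by
    refine ⟨Λ.rng τ, ?_, ?_, Λ.src_rng τ⟩
    · intro i _
      rw [Λ.deg_rng]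
      rfl
    · rw [Λ.rng_rng, hτ]
      exact ⟨lam, rfl, rfl, hcyc.2.symm⟩
  have hRτ : KGraph.AuxR Λ lam (Λ.src τ) := KGraph.aux_Rsrc hlc hcyc hne _ τ rfl hR0
  obtain ⟨σ, hσr, hσd⟩ := KGraph.aux_build hlc hcyc hne
    (∑ j, ((Λ.deg lam ⊔ Λ.deg τ) - Λ.deg τ) j) ((Λ.deg lam ⊔ Λ.deg τ) - Λ.deg τ)
    (Λ.src τ) rfl
    (fun i hi => by
      simp only [Pi.sub_apply, Pi.sup_apply] at hi ⊢
      omega) hRτ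
  have hsrcσ : Λ.src τ = Λ.rng σ := hσr.symm
  have hdx : Λ.deg (Λ.comp τ σ) = Λ.deg lam ⊔ Λ.deg τ := by
    rw [Λ.deg_comp τ σ hsrcσ, hσd]
    funext i
    simp only [Pi.add_apply, Pi.sub_apply, Pi.sup_apply]
    omega
  have hdl : Λ.deg lam ≤ Λ.deg (Λ.comp τ σ) := by
    rw [hdx]; exact le_sup_left
  obtain ⟨h1, h2, h3, h4⟩ := KGraph.aux_split hdl
  have hrngx : Λ.rng (Λ.comp τ σ) = Λ.rng lam := by
    rw [Λ.rng_comp τ σ hsrcσ, hτ]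
  have hrp : Λ.rng (Λ.front (Λ.comp τ σ) (Λ.deg lam)) = Λ.rng lam := by
    rw [KGraph.aux_rng_front hdl, hrngx]
  have hfront := hne lam hcyc (Λ.front (Λ.comp τ σ) (Λ.deg lam)) hrp
    (by rw [h2]; intro i h; exact h)
  rw [h2] at hfront
  have hseg : Λ.infSeg lam (Λ.deg lam) = lam := by
    have hcomp : Λ.comp lam (Λ.cpow lam (Finset.univ.sup (Λ.deg lam))) =
        Λ.cpow lam (Finset.univ.sup (Λ.deg lam) + 1) := rfl
    have hsl : Λ.src lam = Λ.rng (Λ.cpow lam (Finset.univ.sup (Λ.deg lam))) := by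
      rw [KGraph.aux_rng_cpow hcyc.2, hcyc.2]
    have hfu := (KGraph.aux_front_unique hsl hcomp).1
    unfold KGraph.infSeg
    exact hfu
  rw [hseg] at hfront
  rw [hfront] at h1 h4
  exact ⟨Λ.comp τ σ, ⟨Λ.back (Λ.comp τ σ) (Λ.deg lam), h1, h4⟩, ⟨σ, hsrcσ, rfl⟩, hdx⟩
end

section
/- Let Λ be a finite, locally convex k-graph containing a cycle λ with an entrance τ (so τ ∈ r(λ)Λ, d(τ) ≤ d(λ^∞), τ ≠ λ^∞(0,d(τ))). Then for any n ≥ 1 with n·d(λ) ≥ d(τ), we have MCE(λ^n, τ) = ∅, where MCE(μ,ν) = μΛ ∩ νΛ ∩ Λ^{d(μ)∨d(ν)}. -/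
open scoped Classical

namespace KGraph

variable {k : ℕ} (Λ : KGraph k)

lemma front_spec (lam : Λ.Path) (m : Fin k → ℕ) (h : m ≤ Λ.deg lam) :
    ∃ q, Λ.src (Λ.front lam m) = Λ.rng q ∧ Λ.deg (Λ.front lam m) = m ∧
      Λ.comp (Λ.front lam m) q = lam := by
  unfold front split
  rw [dif_pos h]
  have hd : Λ.deg lam = m + (Λ.deg lam - m) := by
    funext i; have := Pi.le_def.mp h i
    simp only [Pi.add_apply, Pi.sub_apply]; omega
  obtain ⟨hs, hdp, hdq, hc⟩ := (Λ.factor_exists lam m (Λ.deg lam - m) hd).choose_spec.choose_spec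
  exact ⟨_, hs, hdp, hc⟩

lemma front_unique {lam p q : Λ.Path} {m : Fin k → ℕ} (hs : Λ.src p = Λ.rng q)
    (hdp : Λ.deg p = m) (hc : Λ.comp p q = lam) : Λ.front lam m = p := by
  have hdeg : Λ.deg lam = Λ.deg p + Λ.deg q := by rw [← hc]; exact Λ.deg_comp p q hs
  have hm : m ≤ Λ.deg lam := by
    rw [Pi.le_def]; intro i
    have h1 := congrFun hdeg i
    have h3 := congrFun hdp i
    simp only [Pi.add_apply] at h1
    omega
  obtain ⟨q', hs', hdp', hc'⟩ := Λ.front_spec lam m hm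
  have hdeg' : Λ.deg (Λ.comp (Λ.front lam m) q') = Λ.deg (Λ.front lam m) + Λ.deg q' :=
    Λ.deg_comp _ _ hs'
  rw [hc'] at hdeg'
  have hdq' : Λ.deg q' = Λ.deg q := by
    funext i
    have h1 := congrFun hdeg i
    have h2 := congrFun hdeg' i
    have h3 := congrFun hdp i
    have h4 := congrFun hdp' i
    simp only [Pi.add_apply] at h1 h2
    omega
  exact (Λ.factor_unique _ _ _ _ hs' hs (by rw [hdp, hdp']) hdq' (by rw [hc, hc'])).1

variable {lam : Λ.Path} (hcyc : Λ.rng lam = Λ.src lam)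

include hcyc

lemma rng_cpow (n : ℕ) : Λ.rng (Λ.cpow lam n) = Λ.rng lam := by
  induction n with
  | zero => exact Λ.rng_rng lam
  | succ n ih => rw [cpow, Λ.rng_comp lam _ (by rw [ih, hcyc])]

lemma src_cpow (n : ℕ) : Λ.src (Λ.cpow lam n) = Λ.src lam := by
  induction n with
  | zero => rw [cpow, Λ.src_rng, hcyc]
  | succ n ih => rw [cpow, Λ.src_comp lam _ (by rw [Λ.rng_cpow hcyc, hcyc]), ih]

lemma deg_cpow (n : ℕ) : Λ.deg (Λ.cpow lam n) = n • Λ.deg lam := by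
  induction n with
  | zero => rw [cpow, Λ.deg_rng, zero_smul]
  | succ n ih =>
    rw [cpow, Λ.deg_comp lam _ (by rw [Λ.rng_cpow hcyc, hcyc]), ih, succ_nsmul']

lemma cpow_add (a b : ℕ) :
    Λ.cpow lam (a + b) = Λ.comp (Λ.cpow lam a) (Λ.cpow lam b) := by
  induction a with
  | zero =>
    simp only [Nat.zero_add, cpow]
    rw [← Λ.rng_cpow hcyc b, Λ.id_comp]
  | succ a ih =>
    have h2 : Λ.src lam = Λ.rng (Λ.cpow lam a) := by rw [Λ.rng_cpow hcyc, hcyc]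
    have h3 : Λ.src (Λ.cpow lam a) = Λ.rng (Λ.cpow lam b) := by
      rw [Λ.src_cpow hcyc, Λ.rng_cpow hcyc, hcyc]
    rw [show a + 1 + b = (a + b) + 1 from by omega]
    show Λ.comp lam (Λ.cpow lam (a + b)) = Λ.comp (Λ.comp lam (Λ.cpow lam a)) (Λ.cpow lam b)
    rw [ih, ← Λ.comp_assoc lam _ _ h2 h3]

end KGraph

/-- If `λ` is a cycle with an entrance `τ` in a finite, locally convex k-graph, then
for any `n ≥ 1` with `n·d(λ) ≥ d(τ)`, `MCE(λⁿ, τ) = ∅`. -/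
theorem entrance_implies_mce_empty {k : ℕ} (Λ : KGraph k)
    (hfin : Λ.FinitePaths) (hlc : Λ.LocallyConvex)
    (lam τ : Λ.Path) (hcyc : Λ.IsCycle lam) (hτ : Λ.rng τ = Λ.rng lam)
    (hle : Λ.LeInfDeg lam (Λ.deg τ)) (hne : τ ≠ Λ.infSeg lam (Λ.deg τ))
    (n : ℕ) (hn : 1 ≤ n) (hd : Λ.deg τ ≤ n • Λ.deg lam) :
    ¬ ∃ x, Λ.MCE (Λ.cpow lam n) τ x := by
  rintro ⟨x, ⟨a, hsa, hca⟩, ⟨b, hsb, hcb⟩, hdx⟩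
  have hcyc' : Λ.rng lam = Λ.src lam := hcyc.2
  have hdegn : Λ.deg (Λ.cpow lam n) = n • Λ.deg lam := Λ.deg_cpow hcyc' n
  -- degree of x is n • deg lam
  have hdx' : Λ.deg x = n • Λ.deg lam := by
    rw [hdx, hdegn, sup_eq_left.mpr hd]
  -- a is a vertex, so x = cpow lam n
  have hda : Λ.deg a = 0 := by
    have h := Λ.deg_comp _ _ hsa
    rw [hca, hdx', hdegn] at h
    funext i
    have := congrFun h i
    simp only [Pi.add_apply, Pi.zero_apply] at this ⊢
    omega
  have hax : x = Λ.cpow lam n := by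
    have hsa' : Λ.src a = a := Λ.src_of_vertex a hda
    have hra : Λ.rng a = a := by
      conv_lhs => rw [← hsa']
      rw [Λ.rng_src, hsa']
    have haa : a = Λ.src (Λ.cpow lam n) := by rw [hsa, hra]
    rw [← hca, haa, Λ.comp_id]
  rw [hax] at hcb
  -- so cpow lam n = comp τ b, hence front (cpow lam n) (deg τ) = τ
  apply hne
  -- the big power used in infSeg
  set N := Finset.univ.sup (Λ.deg τ) + 1 with hN
  have hfn : Λ.front (Λ.cpow lam n) (Λ.deg τ) = τ :=
    Λ.front_unique hsb rfl hcb
  -- front (cpow M) (deg τ) = front (cpow n) (deg τ)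
  have hsplit : ∀ m : ℕ, n ≤ m → Λ.front (Λ.cpow lam m) (Λ.deg τ) = τ := by
    intro m hm
    obtain ⟨c, rfl⟩ := Nat.exists_eq_add_of_le hm
    rw [Λ.cpow_add hcyc' n c]
    have hsrc : Λ.src (Λ.cpow lam n) = Λ.rng (Λ.cpow lam c) := by
      rw [Λ.src_cpow hcyc', Λ.rng_cpow hcyc', hcyc']
    have hsb' : Λ.src τ = Λ.rng (Λ.comp b (Λ.cpow lam c)) := by
      rw [Λ.rng_comp _ _ (by rw [← hsrc, ← hcb, Λ.src_comp _ _ hsb]), hsb]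
    refine Λ.front_unique hsb' rfl ?_
    rw [← Λ.comp_assoc τ b _ hsb (by rw [← hsrc, ← hcb, Λ.src_comp _ _ hsb]), hcb]
  have hNle : Λ.deg τ ≤ N • Λ.deg lam := by
    intro i
    by_cases hzi : Λ.deg lam i = 0
    · rw [hle i hzi]; positivity
    · have h1 : Λ.deg τ i ≤ Finset.univ.sup (Λ.deg τ) :=
        Finset.le_sup (Finset.mem_univ i)
      have h2 : 1 ≤ Λ.deg lam i := Nat.one_le_iff_ne_zero.mpr hzi
      calc Λ.deg τ i ≤ N := by omega
        _ ≤ N * Λ.deg lam i := Nat.le_mul_of_pos_right N h2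
        _ = (N • Λ.deg lam) i := rfl
  -- similarly infSeg = front (cpow M) (deg τ)
  have hfN : Λ.infSeg lam (Λ.deg τ) = Λ.front (Λ.cpow lam N) (Λ.deg τ) := rfl
  -- express cpow M = comp (cpow N) (cpow (M - N))
  have hMN : Λ.front (Λ.cpow lam (max n N)) (Λ.deg τ) =
      Λ.front (Λ.cpow lam N) (Λ.deg τ) := by
    obtain ⟨c, hc⟩ := Nat.exists_eq_add_of_le (le_max_right n N)
    rw [hc, Λ.cpow_add hcyc' N c]
    have hdN : Λ.deg τ ≤ Λ.deg (Λ.cpow lam N) := by rw [Λ.deg_cpow hcyc']; exact hNle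
    obtain ⟨q, hsq, hdq, hcq⟩ := Λ.front_spec (Λ.cpow lam N) (Λ.deg τ) hdN
    have hsrc : Λ.src (Λ.cpow lam N) = Λ.rng (Λ.cpow lam c) := by
      rw [Λ.src_cpow hcyc', Λ.rng_cpow hcyc', hcyc']
    have hsq' : Λ.src q = Λ.rng (Λ.cpow lam c) := by
      rw [← hsrc, ← hcq, Λ.src_comp _ _ hsq]
    have hsq'' : Λ.src (Λ.front (Λ.cpow lam N) (Λ.deg τ)) =
        Λ.rng (Λ.comp q (Λ.cpow lam c)) := by
      rw [Λ.rng_comp _ _ hsq', hsq]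
    refine Λ.front_unique hsq'' hdq ?_
    rw [← Λ.comp_assoc _ q _ hsq hsq', hcq]
  rw [hfN, ← hMN, hsplit (max n N) (le_max_left n N), ← hfn, hsplit n le_rfl]
end
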